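/- arXiv:2406.07598 — 8 statements merged into one kernel-verified Lean document; each statement's English description precedes it below -/
import Mathlib

section
/- Suppose for each x in S we choose x0 = c(x) = h^{-1}·x for some h ∈ G, where c is a canonicalization (c(x) lies in Orb_G(x) and c(x) = c(y) whenever y ∈ Orb_G(x)). Define F(x) = h·Stab_G(x0). Then F is a G-equivariant frame, and it is minimal: for no x does there exist a G-equivariant frame F' with F'(x) a proper subset of F(x). -/
open Pointwise

/-- The minimal frame built from a canonicalization `c` (with `c x = (h x)⁻¹ • x`)
is a `G`-equivariant frame and is minimal. -/
theorem minimal_frame_of_canonicalization {G S : Type*} [Group G] [MulAction G S]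
    (c : S → S) (h : S → G)
    (hc : ∀ x : S, c x = (h x)⁻¹ • x)
    (hrep : ∀ x : S, c x ∈ MulAction.orbit G x)
    (hinv : ∀ x y : S, y ∈ MulAction.orbit G x → c x = c y)
    (F : S → Set G)
    (hF : ∀ x : S, F x = h x • (MulAction.stabilizer G (c x) : Set G)) :
    ((∀ x, (F x).Nonempty) ∧ (∀ (g : G) (x : S), F (g • x) = g • F x)) ∧
      ∀ x : S, ¬ ∃ F' : S → Set G,
        (∀ y, (F' y).Nonempty) ∧ (∀ (g : G) (y : S), F' (g • y) = g • F' y) ∧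
          F' x ⊂ F x := by
  have hxc : ∀ x : S, h x • c x = x := by
    intro x; rw [hc]; simp
  constructor
  · constructor
    · intro x
      refine ⟨h x, ?_⟩
      rw [hF]
      exact ⟨1, by simp [MulAction.mem_stabilizer_iff], by simp⟩
    · intro g x
      have hcx : c x = c (g • x) := hinv x (g • x) ⟨g, rfl⟩
      have h1 : (h (g • x))⁻¹ • (g • x) = c x := by rw [hcx]; exact (hc (g • x)).symm
      have hk : (h (g • x))⁻¹ * (g * h x) ∈ MulAction.stabilizer G (c x) := by
        rw [MulAction.mem_stabilizer_iff]
        calc ((h (g • x))⁻¹ * (g * h x)) • c x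
            = (h (g • x))⁻¹ • (g • (h x • c x)) := by simp [mul_smul]
          _ = c x := by rw [hxc, h1]
      rw [hF, hF, ← hcx, smul_smul, leftCoset_eq_iff]
      exact hk
  · rintro x ⟨F', hne, heq, hsub⟩
    refine hsub.2 ?_
    intro a ha
    obtain ⟨b, hb⟩ := hne x
    have hbF : b ∈ F x := hsub.1 hb
    rw [hF] at ha hbF
    obtain ⟨s, hs, rfl⟩ := ha
    obtain ⟨t, ht, rfl⟩ := hbF
    have hst : s * t⁻¹ ∈ MulAction.stabilizer G (c x) :=
      mul_mem hs (inv_mem ht)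
    set g : G := h x * s * (h x * t)⁻¹ with hg
    have hgx : g • x = x := by
      rw [hg, mul_inv_rev]
      simp only [mul_smul]
      rw [← hc x]
      rw [MulAction.mem_stabilizer_iff.mp (inv_mem ht),
        MulAction.mem_stabilizer_iff.mp hs, hxc]
    have : g • (h x • t) ∈ g • F' x := Set.smul_mem_smul_set hb
    rw [← heq, hgx] at this
    have hgb : g • (h x • t) = h x • s := by
      simp only [smul_eq_mul, hg]
      group
    rwa [hgb] at this
end

section
/- Let μ be a G-invariant σ-finite measure on the Borel σ-algebra of G. Let F̂ be a minimal G-equivariant frame (no x admits a G-equivariant frame F' with F'(x) ⊊ F̂(x)) and F any G-equivariant frame on S. Then for all x such that F(x) and F̂(x) are μ-measurable, μ(F̂(x)) ≤ μ(F(x)). -/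
open Pointwise MeasureTheory

/-- A minimal frame has the smallest measure among all equivariant frames, for any
`G`-invariant σ-finite Borel measure on `G`. -/
theorem minimal_frame_smallest_measure {G S : Type*} [Group G] [TopologicalSpace G]
    [MeasurableSpace G] [BorelSpace G] [MulAction G S]
    (μ : Measure G) [SigmaFinite μ]
    (hμl : ∀ (g : G) (B : Set G), μ ((g * ·) '' B) = μ B)
    (hμr : ∀ (g : G) (B : Set G), μ ((· * g) '' B) = μ B)
    (Fhat F : S → Set G)
    (hFhatne : ∀ x, (Fhat x).Nonempty)
    (hFhateq : ∀ (g : G) (x : S), Fhat (g • x) = g • Fhat x)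
    (hFne : ∀ x, (F x).Nonempty)
    (hFeq : ∀ (g : G) (x : S), F (g • x) = g • F x)
    (hmin : ∀ x : S, ¬ ∃ F' : S → Set G,
      (∀ y, (F' y).Nonempty) ∧ (∀ (g : G) (y : S), F' (g • y) = g • F' y) ∧
        F' x ⊂ Fhat x)
    (x : S) (hmF : MeasurableSet (F x)) (hmFhat : MeasurableSet (Fhat x)) :
    μ (Fhat x) ≤ μ (F x) := by
  classical
  obtain ⟨g₀, hg₀⟩ := hFhatne x
  obtain ⟨f, hf⟩ := hFne x
  set a : G := f⁻¹ * g₀ with ha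
  -- key commutation: right translation commutes with left smul
  have hcomm : ∀ (g : G) (B : Set G), (· * a) '' (g • B) = g • ((· * a) '' B) := by
    intro g B
    ext z
    simp only [Set.mem_image, Set.mem_smul_set]
    constructor
    · rintro ⟨_, ⟨b, hb, rfl⟩, rfl⟩
      exact ⟨b * a, ⟨b, hb, rfl⟩, (mul_assoc _ _ _).symm⟩
    · rintro ⟨_, ⟨b, hb, rfl⟩, rfl⟩
      exact ⟨g * b, ⟨b, hb, rfl⟩, mul_assoc _ _ _⟩
  let F' : S → Set G := fun y =>
    if (Fhat y ∩ (· * a) '' F y).Nonempty then Fhat y ∩ (· * a) '' F y else Fhat y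
  have hF'sub : ∀ y, F' y ⊆ Fhat y := by
    intro y
    by_cases h : (Fhat y ∩ (· * a) '' F y).Nonempty
    · simp only [F', if_pos h]; exact Set.inter_subset_left
    · simp only [F', if_neg h]; exact subset_rfl
  have hF'ne : ∀ y, (F' y).Nonempty := by
    intro y
    by_cases h : (Fhat y ∩ (· * a) '' F y).Nonempty
    · simpa only [F', if_pos h] using h
    · simpa only [F', if_neg h] using hFhatne y
  have hF'eq : ∀ (g : G) (y : S), F' (g • y) = g • F' y := by
    intro g y
    have hkey : Fhat (g • y) ∩ (· * a) '' F (g • y) = g • (Fhat y ∩ (· * a) '' F y) := by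
      rw [hFhateq, hFeq, hcomm, Set.smul_set_inter]
    have hne : (Fhat (g • y) ∩ (· * a) '' F (g • y)).Nonempty ↔
        (Fhat y ∩ (· * a) '' F y).Nonempty := by
      rw [hkey]; exact Set.smul_set_nonempty
    by_cases h : (Fhat y ∩ (· * a) '' F y).Nonempty
    · simp only [F', if_pos h, if_pos (hne.mpr h), hkey]
    · simp only [F', if_neg h, if_neg (fun h' => h (hne.mp h')), hFhateq]
  have hnex : (Fhat x ∩ (· * a) '' F x).Nonempty := by
    refine ⟨g₀, hg₀, f, hf, ?_⟩
    simp [ha]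
  have hF'x : F' x = Fhat x := by
    by_contra h
    exact hmin x ⟨F', hF'ne, hF'eq, ⟨hF'sub x, fun hsub => h (le_antisymm (hF'sub x) hsub)⟩⟩
  have hsub : Fhat x ⊆ (· * a) '' F x := by
    rw [← hF'x]
    simp only [F', if_pos hnex]
    exact Set.inter_subset_right
  calc μ (Fhat x) ≤ μ ((· * a) '' F x) := measure_mono hsub
    _ = μ (F x) := hμr a (F x)
end

section
/- For a finite group G acting on vector spaces V and W via representations ρ_V and ρ_W, let F be a G-equivariant frame (F(ρ_V(g)x) = gF(x)) with F(x) finite nonempty for each x. Then the frame-averaged function ⟨Φ⟩_F(x) = (1/|F(x)|) Σ_{g∈F(x)} ρ_W(g)Φ(ρ_V(g^{-1})x) is G-equivariant. -/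
open Finset

/-- Frame averaging over a `G`-equivariant frame produces a `G`-equivariant function. -/
theorem frame_averaging_equivariant {G V W : Type*} [Group G] [DecidableEq G]
    [AddCommGroup V] [Module ℝ V] [AddCommGroup W] [Module ℝ W]
    (ρV : Representation ℝ G V) (ρW : Representation ℝ G W)
    (F : V → Finset G)
    (hne : ∀ x, (F x).Nonempty)
    (heq : ∀ (g : G) (x : V), F (ρV g x) = (F x).image (g * ·))
    (Φ : V → W) (A : V → W)
    (hA : ∀ x : V,
      A x = ((F x).card : ℝ)⁻¹ • ∑ h ∈ F x, ρW h (Φ (ρV h⁻¹ x)))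
    (g : G) (x : V) :
    A (ρV g x) = ρW g (A x) := by
  have hinj : Function.Injective (g * ·) := fun a b h => by simpa using h
  rw [hA, hA, heq, Finset.card_image_of_injective _ hinj,
    Finset.sum_image (fun a _ b _ h => hinj h), map_smul, map_sum]
  congr 1
  refine Finset.sum_congr rfl fun h _ => ?_
  have h1 : ρV g⁻¹ (ρV g x) = x := by
    rw [← Module.End.mul_apply, ← map_mul, inv_mul_cancel, map_one, Module.End.one_apply]
  have : ρV (g * h)⁻¹ (ρV g x) = ρV h⁻¹ x := by
    rw [mul_inv_rev, map_mul, Module.End.mul_apply, h1]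
  rw [this, map_mul, Module.End.mul_apply]
end

section
/- Uniqueness of the generalized QR decomposition (square case): Let η be a d×d diagonal matrix with entries ±1, and let P ∈ ℝ^{d×d} be invertible with no null columns. Suppose P = Q D_η R = Q' D_η' R' where Q, Q' satisfy Qᵀ η Q = D_η and Q'ᵀ η Q' = D_η' with D_η, D_η' diagonal matrices with entries ±1, and R, R' are upper triangular with positive diagonal entries. Then Q = Q', D_η = D_η', and R = R'. -/
open Matrix

lemma tri_mul_diag_apply {d : ℕ} {A B : Matrix (Fin d) (Fin d) ℝ}
    (hA : A.BlockTriangular id) (hB : B.BlockTriangular id) (i : Fin d) :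
    (A * B) i i = A i i * B i i := by
  rw [Matrix.mul_apply]
  refine Finset.sum_eq_single i (fun k _ hk => ?_) (fun h => absurd (Finset.mem_univ i) h)
  rcases lt_or_gt_of_ne hk with h | h
  · rw [hA h, zero_mul]
  · rw [hB h, mul_zero]

/-- Uniqueness of the generalized QR decomposition, square case. -/
theorem genQR_unique_square {d : ℕ} (η : Matrix (Fin d) (Fin d) ℝ)
    (f : Fin d → ℝ) (hη : η = Matrix.diagonal f) (hf : ∀ i, f i = 1 ∨ f i = -1)
    (P : Matrix (Fin d) (Fin d) ℝ) (hPinv : IsUnit P)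
    (hnull : ∀ j : Fin d, (Pᵀ * η * P) j j ≠ 0)
    (Q Q' D D' R R' : Matrix (Fin d) (Fin d) ℝ)
    (hQ : Qᵀ * η * Q = D) (hQ' : Q'ᵀ * η * Q' = D')
    (g g' : Fin d → ℝ)
    (hD : D = Matrix.diagonal g) (hg : ∀ i, g i = 1 ∨ g i = -1)
    (hD' : D' = Matrix.diagonal g') (hg' : ∀ i, g' i = 1 ∨ g' i = -1)
    (hR : ∀ i j : Fin d, j < i → R i j = 0) (hRd : ∀ i, 0 < R i i)
    (hR' : ∀ i j : Fin d, j < i → R' i j = 0) (hRd' : ∀ i, 0 < R' i i)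
    (hdec : P = Q * D * R) (hdec' : P = Q' * D' * R') :
    Q = Q' ∧ D = D' ∧ R = R' := by
  -- triangularity
  have hRtri : R.BlockTriangular id := fun i j h => hR i j h
  have hRtri' : R'.BlockTriangular id := fun i j h => hR' i j h
  -- invertibility of R and R'
  have hdetR : IsUnit R.det := by
    rw [Matrix.det_of_upperTriangular hRtri]
    exact isUnit_iff_ne_zero.mpr (Finset.prod_pos (fun i _ => hRd i)).ne'
  have hdetR' : IsUnit R'.det := by
    rw [Matrix.det_of_upperTriangular hRtri']
    exact isUnit_iff_ne_zero.mpr (Finset.prod_pos (fun i _ => hRd' i)).ne'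
  -- D * D = 1
  have hgg : ∀ i, g i * g i = 1 := fun i => by rcases hg i with h | h <;> rw [h] <;> norm_num
  have hgg' : ∀ i, g' i * g' i = 1 := fun i => by rcases hg' i with h | h <;> rw [h] <;> norm_num
  have hDD : D * D = 1 := by
    rw [hD, Matrix.diagonal_mul_diagonal]
    rw [show (fun i => g i * g i) = fun _ => (1:ℝ) from funext hgg]
    exact Matrix.diagonal_one
  have hDD' : D' * D' = 1 := by
    rw [hD', Matrix.diagonal_mul_diagonal]
    rw [show (fun i => g' i * g' i) = fun _ => (1:ℝ) from funext hgg']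
    exact Matrix.diagonal_one
  have hDt : Dᵀ = D := by rw [hD]; exact Matrix.diagonal_transpose g
  have hDt' : D'ᵀ = D' := by rw [hD']; exact Matrix.diagonal_transpose g'
  -- key equation
  have key : Rᵀ * D * R = R'ᵀ * D' * R' := by
    have h1 : Pᵀ * η * P = Rᵀ * D * R := by
      rw [hdec]
      calc (Q * D * R)ᵀ * η * (Q * D * R)
          = Rᵀ * (Dᵀ * ((Qᵀ * η * Q) * (D * R))) := by
            simp only [Matrix.transpose_mul, Matrix.mul_assoc]
        _ = Rᵀ * (D * (D * (D * R))) := by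
            rw [hQ, hDt]
        _ = Rᵀ * D * R := by
            rw [← Matrix.mul_assoc D D (D * R), hDD, Matrix.one_mul,
              ← Matrix.mul_assoc]
    have h2 : Pᵀ * η * P = R'ᵀ * D' * R' := by
      rw [hdec']
      calc (Q' * D' * R')ᵀ * η * (Q' * D' * R')
          = R'ᵀ * (D'ᵀ * ((Q'ᵀ * η * Q') * (D' * R'))) := by
            simp only [Matrix.transpose_mul, Matrix.mul_assoc]
        _ = R'ᵀ * (D' * (D' * (D' * R'))) := by
            rw [hQ', hDt']
        _ = R'ᵀ * D' * R' := by
            rw [← Matrix.mul_assoc D' D' (D' * R'), hDD', Matrix.one_mul,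
              ← Matrix.mul_assoc]
    exact h1.symm.trans h2
  -- define A and B
  set A := R * R'⁻¹ with hAdef
  set B := R' * R⁻¹ with hBdef
  haveI : Invertible R := R.invertibleOfIsUnitDet hdetR
  haveI : Invertible R' := R'.invertibleOfIsUnitDet hdetR'
  have hAtri : A.BlockTriangular id := hRtri.mul (blockTriangular_inv_of_blockTriangular hRtri')
  have hBtri : B.BlockTriangular id := hRtri'.mul (blockTriangular_inv_of_blockTriangular hRtri)
  have hAR' : A * R' = R := by
    rw [hAdef, Matrix.mul_assoc, Matrix.nonsing_inv_mul R' hdetR', Matrix.mul_one]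
  have hAB : A * B = 1 := by
    rw [hAdef, hBdef, Matrix.mul_assoc, ← Matrix.mul_assoc R'⁻¹ R' R⁻¹,
      Matrix.nonsing_inv_mul R' hdetR', Matrix.one_mul, Matrix.mul_nonsing_inv R hdetR]
  -- D * A = Bᵀ * D'
  have hmain : D * A = Bᵀ * D' := by
    have hdetRT : IsUnit Rᵀ.det := by rwa [Matrix.det_transpose]
    have h := congrArg (fun M => (Rᵀ)⁻¹ * M * R'⁻¹) key
    simp only [Matrix.mul_assoc] at h
    rw [← Matrix.mul_assoc (Rᵀ)⁻¹ Rᵀ, Matrix.nonsing_inv_mul Rᵀ hdetRT, Matrix.one_mul,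
      Matrix.mul_nonsing_inv R' hdetR', Matrix.mul_one] at h
    rw [hAdef, hBdef, Matrix.transpose_mul, Matrix.transpose_nonsing_inv]
    simp only [Matrix.mul_assoc]
    exact h
  -- off-diagonal of A vanishes
  have hgne : ∀ i, g i ≠ 0 := fun i => by rcases hg i with h | h <;> rw [h] <;> norm_num
  have hAoff : ∀ i j, i ≠ j → A i j = 0 := by
    intro i j hij
    rcases lt_or_gt_of_ne hij with h | h
    · have := congrFun (congrFun hmain i) j
      rw [hD, Matrix.diagonal_mul, hD', Matrix.mul_diagonal, Matrix.transpose_apply,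
        hBtri h, zero_mul] at this
      exact (mul_eq_zero.mp this).resolve_left (hgne i)
    · exact hAtri h
  -- diagonal facts
  have hABdiag : ∀ i, A i i * B i i = 1 := by
    intro i
    have := congrFun (congrFun hAB i) i
    rw [tri_mul_diag_apply hAtri hBtri] at this
    simpa using this
  have hApos : ∀ i, 0 < A i i := by
    intro i
    have := congrFun (congrFun hAR' i) i
    rw [tri_mul_diag_apply hAtri hRtri'] at this
    have h1 := hRd i
    have h2 := hRd' i
    nlinarith
  have hdiag : ∀ i, g i = g' i ∧ A i i = 1 := by
    intro i
    have hm := congrFun (congrFun hmain i) i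
    rw [hD, Matrix.diagonal_mul, hD', Matrix.mul_diagonal, Matrix.transpose_apply] at hm
    -- g i * A i i = B i i * g' i
    have hab := hABdiag i
    have hpos := hApos i
    have h2 : g i * (A i i * A i i) = g' i := by
      calc g i * (A i i * A i i) = g i * A i i * A i i := by ring
        _ = B i i * g' i * A i i := by rw [hm]
        _ = g' i * (A i i * B i i) := by ring
        _ = g' i := by rw [hab, mul_one]
    rcases hg i with h | h <;> rcases hg' i with h' | h' <;> rw [h, h'] at h2
    · refine ⟨h.trans h'.symm, ?_⟩
      have h5 : (A i i - 1) * (A i i + 1) = 0 := by nlinarith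
      rcases mul_eq_zero.mp h5 with h6 | h6 <;> linarith
    · exfalso; nlinarith
    · exfalso; nlinarith
    · refine ⟨h.trans h'.symm, ?_⟩
      have h5 : (A i i - 1) * (A i i + 1) = 0 := by nlinarith
      rcases mul_eq_zero.mp h5 with h6 | h6 <;> linarith
  have hG : g = g' := funext fun i => (hdiag i).1
  have hAone : A = 1 := by
    ext i j
    by_cases h : i = j
    · subst h; rw [(hdiag i).2, Matrix.one_apply_eq]
    · rw [hAoff i j h, Matrix.one_apply_ne h]
  have hRR : R = R' := by rw [← hAR', hAone, Matrix.one_mul]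
  have hDDeq : D = D' := by rw [hD, hD', hG]
  refine ⟨?_, hDDeq, hRR⟩
  have h3 : Q * D * R = Q' * D * R := by rw [← hdec, hdec', ← hDDeq, ← hRR]
  have h4 : Q * D = Q' * D := by
    have := congrArg (· * R⁻¹) h3
    simpa only [Matrix.mul_assoc, Matrix.mul_nonsing_inv R hdetR, Matrix.mul_one] using this
  have := congrArg (· * D) h4
  simpa only [Matrix.mul_assoc, hDD, Matrix.mul_one] using this
end

section
/- Uniqueness of R in the generalized QR decomposition (tall case): Let η be a d×d diagonal ±1 matrix and P ∈ ℝ^{d×n}, d > n, of rank n with all columns non-null. If P = Q̃ D̃_η R̃ = Q̃' D̃_η' R̃' where Q̃, Q̃' ∈ ℝ^{d×n} have columns orthonormal with respect to η (Q̃ᵀηQ̃ = D̃_η, Q̃'ᵀηQ̃' = D̃_η' diagonal with entries ±1), and R̃, R̃' are n×n upper triangular with positive diagonals, then Q̃ = Q̃', D̃_η = D̃_η', and R̃ = R̃'. -/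
/-!
Both factorizations have the same Gram matrix `Pᵀ η P = Rᵀ D R = R'ᵀ D' R'`. The transition
matrix `T = R' R⁻¹` is upper triangular with positive diagonal and satisfies `Tᵀ D' T = D`, so
`D' T = T⁻ᵀ D` is at once upper and lower triangular. Hence `T` is diagonal with
`T_ii² D'_ii = D_ii`; as `T_ii > 0` and `D_ii, D'_ii = ±1`, this forces `T = 1`.
Then `R = R'`, `D = D'`, and `Q = Q'` after cancelling the invertible factor `D R`.
-/

open Matrix

namespace Matrix

theorem diagonal_mul_self_eq_one {n K : Type*} [Fintype n] [DecidableEq n] [Semiring K]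
    {g : n → K} (hg : ∀ i, g i * g i = 1) : diagonal g * diagonal g = 1 := by
  rw [diagonal_mul_diagonal, ← diagonal_one]
  exact congrArg diagonal (funext hg)

theorem transpose_mul_mul_eq_of_transpose_mul_mul_eq_diagonal {d n K : Type*} [Fintype d]
    [Fintype n] [DecidableEq n] [CommRing K] {η : Matrix d d K} {Q : Matrix d n K}
    {g : n → K} (hg : ∀ i, g i * g i = 1) (hQ : Qᵀ * η * Q = diagonal g) (R : Matrix n n K) :
    (Q * diagonal g * R)ᵀ * η * (Q * diagonal g * R) = Rᵀ * diagonal g * R := by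
  calc (Q * diagonal g * R)ᵀ * η * (Q * diagonal g * R)
      = Rᵀ * diagonal g * (Qᵀ * η * Q) * diagonal g * R := by
        simp only [transpose_mul, diagonal_transpose, Matrix.mul_assoc]
    _ = Rᵀ * (diagonal g * diagonal g) * diagonal g * R := by
        rw [hQ, Matrix.mul_assoc Rᵀ]
    _ = Rᵀ * diagonal g * R := by
        rw [diagonal_mul_self_eq_one hg, Matrix.mul_one]

variable {m K : Type*} [LinearOrder m]

theorem IsUpperTriangular.isDiag_of_isLowerTriangular [Zero K] {M : Matrix m m K}
    (hu : M.IsUpperTriangular) (hl : M.IsLowerTriangular) : M.IsDiag := fun _ _ hij =>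
  (lt_or_gt_of_ne hij).elim (fun h => hl h) (fun h => hu h)

variable [Fintype m]

theorem IsUpperTriangular.mul_apply_self [NonUnitalNonAssocSemiring K] {A B : Matrix m m K}
    (hA : A.IsUpperTriangular) (hB : B.IsUpperTriangular) (i : m) :
    (A * B) i i = A i i * B i i := by
  rw [mul_apply, Finset.sum_eq_single i (fun k _ hk => ?_) (by simp)]
  rcases lt_or_gt_of_ne hk with h | h
  · rw [hA h, zero_mul]
  · rw [hB h, mul_zero]

variable [DecidableEq m]

section Field

variable [Field K]

theorem IsUpperTriangular.isUnit_det {R : Matrix m m K} (hR : R.IsUpperTriangular)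
    (hdiag : ∀ i, R i i ≠ 0) : IsUnit R.det := by
  rw [det_of_isUpperTriangular hR]
  exact (Finset.prod_ne_zero_iff.mpr fun i _ => hdiag i).isUnit

theorem IsUpperTriangular.inv_apply_self {R : Matrix m m K} (hR : R.IsUpperTriangular)
    (hdet : IsUnit R.det) (i : m) : R⁻¹ i i = (R i i)⁻¹ := by
  have : Invertible R := R.invertibleOfIsUnitDet hdet
  have hRinv : R⁻¹.IsUpperTriangular := blockTriangular_inv_of_blockTriangular hR
  refine eq_inv_of_mul_eq_one_left ?_
  rw [← hRinv.mul_apply_self hR, nonsing_inv_mul R hdet, one_apply_eq]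

variable [LinearOrder K] [IsStrictOrderedRing K]

theorem IsUpperTriangular.eq_one_of_transpose_mul_diagonal_mul_eq {T : Matrix m m K}
    (hT : T.IsUpperTriangular) (hpos : ∀ i, 0 < T i i) {g g' : m → K}
    (hg : ∀ i, g i * g i = 1) (hg' : ∀ i, g' i * g' i = 1)
    (h : Tᵀ * diagonal g' * T = diagonal g) : T = 1 := by
  have hdet : IsUnit Tᵀ.det := isUnit_det_transpose T (hT.isUnit_det fun i => (hpos i).ne')
  have : Invertible Tᵀ := Tᵀ.invertibleOfIsUnitDet hdet
  have hU : diagonal g' * T = (Tᵀ)⁻¹ * diagonal g := by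
    rw [← h, Matrix.mul_assoc, ← Matrix.mul_assoc (Tᵀ)⁻¹, nonsing_inv_mul _ hdet,
      Matrix.one_mul]
  have hLower : (diagonal g' * T).IsLowerTriangular := hU ▸
    (blockTriangular_inv_of_blockTriangular hT.transpose).mul (blockTriangular_diagonal g)
  have hUdiag : (diagonal g' * T).IsDiag :=
    IsUpperTriangular.isDiag_of_isLowerTriangular ((blockTriangular_diagonal g').mul hT) hLower
  have hTdiag : T.IsDiag := fun i j hij => by
    have : (diagonal g' * T) i j = 0 := hUdiag hij
    rw [diagonal_mul] at this
    exact (mul_eq_zero.mp this).resolve_left (left_ne_zero_of_mul_eq_one (hg' i))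
  rw [← hTdiag.diagonal_diag, diagonal_transpose, diagonal_mul_diagonal,
    diagonal_mul_diagonal] at h
  rw [← hTdiag.diagonal_diag, ← diagonal_one]
  refine congrArg diagonal (funext fun i => ?_)
  have hi : T i i * g' i * T i i = g i := congrFun (diagonal_injective h) i
  have hpow : T i i ^ 4 = 1 := by
    calc T i i ^ 4 = (T i i * g' i * T i i) * (T i i * g' i * T i i) := by
          linear_combination (-(T i i ^ 4)) * hg' i
      _ = 1 := by rw [hi, hg i]
  exact (pow_eq_one_iff_of_nonneg (hpos i).le (by norm_num)).mp hpow

theorem IsUpperTriangular.eq_of_transpose_mul_diagonal_mul_eq {R R' : Matrix m m K}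
    (hR : R.IsUpperTriangular) (hR' : R'.IsUpperTriangular)
    (hpos : ∀ i, 0 < R i i) (hpos' : ∀ i, 0 < R' i i) {g g' : m → K}
    (hg : ∀ i, g i * g i = 1) (hg' : ∀ i, g' i * g' i = 1)
    (h : Rᵀ * diagonal g * R = R'ᵀ * diagonal g' * R') : R = R' ∧ g = g' := by
  have hdet : IsUnit R.det := hR.isUnit_det fun i => (hpos i).ne'
  have : Invertible R := R.invertibleOfIsUnitDet hdet
  have hT : (R' * R⁻¹).IsUpperTriangular := hR'.mul (blockTriangular_inv_of_blockTriangular hR)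
  have hTpos : ∀ i, 0 < (R' * R⁻¹) i i := fun i => by
    rw [hR'.mul_apply_self (blockTriangular_inv_of_blockTriangular hR), hR.inv_apply_self hdet]
    exact mul_pos (hpos' i) (inv_pos.mpr (hpos i))
  have hform : (R' * R⁻¹)ᵀ * diagonal g' * (R' * R⁻¹) = diagonal g := by
    calc (R' * R⁻¹)ᵀ * diagonal g' * (R' * R⁻¹)
        = (R⁻¹)ᵀ * (R'ᵀ * diagonal g' * R') * R⁻¹ := by
          simp only [transpose_mul, Matrix.mul_assoc]
      _ = (R * R⁻¹)ᵀ * diagonal g * (R * R⁻¹) := by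
          rw [← h]; simp only [transpose_mul, Matrix.mul_assoc]
      _ = diagonal g := by
          rw [mul_nonsing_inv R hdet, transpose_one, Matrix.one_mul, Matrix.mul_one]
  have hT1 := hT.eq_one_of_transpose_mul_diagonal_mul_eq hTpos hg hg' hform
  have hRR : R = R' := by
    rw [← Matrix.one_mul R, ← hT1, nonsing_inv_mul_cancel_right _ _ hdet]
  refine ⟨hRR, diagonal_injective ?_⟩
  rw [← hform, hT1, transpose_one, Matrix.one_mul, Matrix.mul_one]

end Field

end Matrix

theorem genQR_unique_tall_general {d n : ℕ}
    (η : Matrix (Fin d) (Fin d) ℝ)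
    (P : Matrix (Fin d) (Fin n) ℝ)
    (Q Q' : Matrix (Fin d) (Fin n) ℝ)
    (D D' R R' : Matrix (Fin n) (Fin n) ℝ)
    (hQ : Qᵀ * η * Q = D) (hQ' : Q'ᵀ * η * Q' = D')
    (g g' : Fin n → ℝ)
    (hD : D = Matrix.diagonal g) (hg : ∀ i, g i = 1 ∨ g i = -1)
    (hD' : D' = Matrix.diagonal g') (hg' : ∀ i, g' i = 1 ∨ g' i = -1)
    (hR : ∀ i j : Fin n, j < i → R i j = 0) (hRd : ∀ i, 0 < R i i)
    (hR' : ∀ i j : Fin n, j < i → R' i j = 0) (hRd' : ∀ i, 0 < R' i i)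
    (hdec : P = Q * D * R) (hdec' : P = Q' * D' * R') :
    Q = Q' ∧ D = D' ∧ R = R' := by
  subst hD hD' hdec
  have hgg : ∀ i, g i * g i = 1 := fun i => mul_self_eq_one_iff.mpr (hg i)
  have hgg' : ∀ i, g' i * g' i = 1 := fun i => mul_self_eq_one_iff.mpr (hg' i)
  have hRu : R.IsUpperTriangular := fun i j h => hR i j h
  have hRu' : R'.IsUpperTriangular := fun i j h => hR' i j h
  obtain ⟨rfl, rfl⟩ : R = R' ∧ g = g' := by
    refine hRu.eq_of_transpose_mul_diagonal_mul_eq hRu' hRd hRd' hgg hgg' ?_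
    rw [← transpose_mul_mul_eq_of_transpose_mul_mul_eq_diagonal hgg hQ,
      ← transpose_mul_mul_eq_of_transpose_mul_mul_eq_diagonal hgg' hQ', hdec']
  refine ⟨?_, rfl, rfl⟩
  have : Invertible (diagonal g) := invertibleOfLeftInverse _ _ (diagonal_mul_self_eq_one hgg)
  have : Invertible R := R.invertibleOfIsUnitDet (hRu.isUnit_det fun i => (hRd i).ne')
  have : Invertible (diagonal g * R) := invertibleMul (diagonal g) R
  exact mul_left_injective_of_invertible (diagonal g * R)
    (by simpa only [Matrix.mul_assoc] using hdec')

/-- Uniqueness of the generalized QR decomposition, tall case (`d > n`). -/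
theorem genQR_unique_tall {d n : ℕ} (hdn : n < d)
    (η : Matrix (Fin d) (Fin d) ℝ)
    (f : Fin d → ℝ) (hη : η = Matrix.diagonal f) (hf : ∀ i, f i = 1 ∨ f i = -1)
    (P : Matrix (Fin d) (Fin n) ℝ) (hrank : P.rank = n)
    (hnull : ∀ j : Fin n, (Pᵀ * η * P) j j ≠ 0)
    (Q Q' : Matrix (Fin d) (Fin n) ℝ)
    (D D' R R' : Matrix (Fin n) (Fin n) ℝ)
    (hQ : Qᵀ * η * Q = D) (hQ' : Q'ᵀ * η * Q' = D')
    (g g' : Fin n → ℝ)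
    (hD : D = Matrix.diagonal g) (hg : ∀ i, g i = 1 ∨ g i = -1)
    (hD' : D' = Matrix.diagonal g') (hg' : ∀ i, g' i = 1 ∨ g' i = -1)
    (hR : ∀ i j : Fin n, j < i → R i j = 0) (hRd : ∀ i, 0 < R i i)
    (hR' : ∀ i j : Fin n, j < i → R' i j = 0) (hRd' : ∀ i, 0 < R' i i)
    (hdec : P = Q * D * R) (hdec' : P = Q' * D' * R') :
    Q = Q' ∧ D = D' ∧ R = R' :=
  genQR_unique_tall_general η P Q Q' D D' R R' hQ hQ' g g' hD hg hD' hg' hR hRd hR' hRd' hdec hdec'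
end

section
/- Point-group correspondence: Let P ∈ ℝ^{d×n} have rank d, no null columns, and no repeated columns. Then there exists a permutation matrix S ≠ I_n with Sᵀ(PᵀηP)S = PᵀηP if and only if there exists O ∈ G_η(d) with O ≠ I_d such that OP = PS for some permutation matrix S. -/
/-!
A nontrivial `O` with `O P = P S` preserves the Gram matrix `Pᵀ η P` and forces `S ≠ 1`, since
`P` has a right inverse. Conversely, if `S` stabilises the Gram matrix, then `Q = P S` and `P`
have the same Gram matrix, so (η being nondegenerate and `Q` of full row rank) `ker P ⊆ ker Q`;
hence `Q = O P` for `O = Q R`, with `R` a right inverse of `P`, and `O` is an η-isometry.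
Distinct columns make `O = 1` force `S = 1`.
-/

open Matrix

namespace Matrix

variable {m n l K : Type*} [Fintype m] [Fintype n] [DecidableEq m]

theorem exists_mul_eq_one_of_rank_eq_card [DecidableEq n] [Field K] (P : Matrix m n K)
    (hP : P.rank = Fintype.card m) : ∃ R : Matrix n m K, P * R = 1 := by
  have hsurj : LinearMap.range P.mulVecLin = ⊤ := by
    apply Submodule.eq_top_of_finrank_eq
    rw [← Matrix.rank, hP, Module.finrank_fintype_fun_eq_card]
  obtain ⟨g, hg⟩ := P.mulVecLin.exists_rightInverse_of_surjective hsurj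
  refine ⟨LinearMap.toMatrix' g, ?_⟩
  rw [← LinearMap.toMatrix'_toLin' P, ← LinearMap.toMatrix'_comp]
  exact (congrArg LinearMap.toMatrix' hg).trans LinearMap.toMatrix'_id

variable [CommRing K]

theorem eq_of_transpose_mul_mul_eq {P : Matrix m n K} {R : Matrix n m K} (hPR : P * R = 1)
    {A B : Matrix m m K} (h : Pᵀ * A * P = Pᵀ * B * P) : A = B := by
  have hRP : Rᵀ * Pᵀ = 1 := by rw [← transpose_mul, hPR, transpose_one]
  exact mul_right_injective_of_inv Rᵀ Pᵀ hRP (mul_left_injective_of_inv P R hPR h)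

theorem mul_eq_mul_of_transpose_mul_mul_eq {η : Matrix m m K} (hη : IsUnit η)
    {P Q : Matrix m n K} {R : Matrix n m K} (hQR : Q * R = 1)
    (hgram : Qᵀ * η * Q = Pᵀ * η * P) {N N' : Matrix n l K} (h : P * N = P * N') :
    Q * N = Q * N' := by
  obtain ⟨_⟩ := hη.nonempty_invertible
  have hRQ : Rᵀ * Qᵀ = 1 := by rw [← transpose_mul, hQR, transpose_one]
  apply mul_right_injective_of_invertible η
  apply mul_right_injective_of_inv Rᵀ Qᵀ hRQ
  simp only [← Matrix.mul_assoc, hgram]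
  simp only [Matrix.mul_assoc, h]

theorem exists_isometry_mul_eq_of_transpose_mul_mul_eq [DecidableEq n] {η : Matrix m m K}
    (hη : IsUnit η) {P Q : Matrix m n K} {R R' : Matrix n m K} (hPR : P * R = 1) (hQR' : Q * R' = 1)
    (hgram : Qᵀ * η * Q = Pᵀ * η * P) :
    ∃ O : Matrix m m K, Oᵀ * η * O = η ∧ O * P = Q := by
  have hOP : Q * R * P = Q := by
    rw [Matrix.mul_assoc]
    nth_rw 2 [← Matrix.mul_one Q]
    refine mul_eq_mul_of_transpose_mul_mul_eq hη hQR' hgram ?_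
    rw [← Matrix.mul_assoc, hPR, Matrix.one_mul, Matrix.mul_one]
  refine ⟨Q * R, eq_of_transpose_mul_mul_eq hPR ?_, hOP⟩
  calc Pᵀ * ((Q * R)ᵀ * η * (Q * R)) * P = (Q * R * P)ᵀ * η * (Q * R * P) := by
        simp only [transpose_mul, Matrix.mul_assoc]
    _ = Pᵀ * η * P := by rw [hOP, hgram]

end Matrix

namespace Equiv.Perm

variable {m n R : Type*} [Fintype n] [DecidableEq n]

theorem permMatrix_mul_transpose [NonAssocSemiring R] (σ : Equiv.Perm n) :
    σ.permMatrix R * (σ.permMatrix R)ᵀ = 1 := by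
  rw [transpose_permMatrix, ← permMatrix_mul, inv_mul_cancel, permMatrix_one]

theorem eq_one_of_mul_permMatrix_eq_self [Semiring R] {P : Matrix m n R}
    (hP : Function.Injective Pᵀ) {σ : Equiv.Perm n} (h : P * σ.permMatrix R = P) : σ = 1 := by
  rw [PEquiv.mul_toMatrix_toPEquiv] at h
  ext j
  have hcol : Pᵀ (σ.symm j) = Pᵀ j := funext fun k => congrFun (congrFun h k) j
  simpa using congrArg σ (hP hcol).symm

end Equiv.Perm

theorem point_group_correspondence_general {d n : ℕ}
    (η : Matrix (Fin d) (Fin d) ℝ)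
    (f : Fin d → ℝ) (hη : η = Matrix.diagonal f) (hf : ∀ i, f i = 1 ∨ f i = -1)
    (P : Matrix (Fin d) (Fin n) ℝ) (hrank : P.rank = d)
    (hnorep : ∀ i j : Fin n, (∀ k : Fin d, P k i = P k j) → i = j) :
    (∃ σ : Equiv.Perm (Fin n), σ.permMatrix ℝ ≠ 1 ∧
        (σ.permMatrix ℝ)ᵀ * (Pᵀ * η * P) * σ.permMatrix ℝ = Pᵀ * η * P) ↔
      (∃ (O : Matrix (Fin d) (Fin d) ℝ) (σ : Equiv.Perm (Fin n)),
        Oᵀ * η * O = η ∧ O ≠ 1 ∧ O * P = P * σ.permMatrix ℝ) := by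
  obtain ⟨R, hPR⟩ := P.exists_mul_eq_one_of_rank_eq_card (by rw [hrank, Fintype.card_fin])
  have hηunit : IsUnit η := by
    rw [hη, isUnit_diagonal, Pi.isUnit_iff]
    intro i
    rcases hf i with h | h <;> simp [h]
  have gram_mul (A : Matrix (Fin d) (Fin n) ℝ) (B : Matrix (Fin n) (Fin n) ℝ) :
      (A * B)ᵀ * η * (A * B) = Bᵀ * (Aᵀ * η * A) * B := by
    simp only [transpose_mul, Matrix.mul_assoc]
  constructor
  · rintro ⟨σ, hσ, hstab⟩
    have hQR : P * σ.permMatrix ℝ * ((σ.permMatrix ℝ)ᵀ * R) = 1 := by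
      rw [Matrix.mul_assoc, ← Matrix.mul_assoc (σ.permMatrix ℝ),
        Equiv.Perm.permMatrix_mul_transpose, Matrix.one_mul, hPR]
    obtain ⟨O, hO, hOP⟩ := exists_isometry_mul_eq_of_transpose_mul_mul_eq hηunit hPR hQR
      ((gram_mul P _).trans hstab)
    refine ⟨O, σ, hO, ?_, hOP⟩
    rintro rfl
    have hσ1 : σ = 1 := Equiv.Perm.eq_one_of_mul_permMatrix_eq_self
      (fun i j h => hnorep i j (congrFun h)) (by rw [← hOP, Matrix.one_mul])
    exact hσ (by rw [hσ1, permMatrix_one])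
  · rintro ⟨O, σ, hO, hO1, hOP⟩
    refine ⟨σ, fun h => hO1 ?_, ?_⟩
    · exact mul_left_injective_of_inv P R hPR
        (show O * P = 1 * P by rw [hOP, h, Matrix.mul_one, Matrix.one_mul])
    · calc (σ.permMatrix ℝ)ᵀ * (Pᵀ * η * P) * σ.permMatrix ℝ
          = (O * P)ᵀ * η * (O * P) := by rw [hOP, gram_mul]
        _ = Pᵀ * (Oᵀ * η * O) * P := by simp only [transpose_mul, Matrix.mul_assoc]
        _ = Pᵀ * η * P := by rw [hO]

/-- Point-group correspondence: a nontrivial permutation stabilizing the Gram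
matrix `Pᵀ η P` exists iff a nontrivial `O ∈ G_η(d)` with `O P = P S` exists. -/
theorem point_group_correspondence {d n : ℕ}
    (η : Matrix (Fin d) (Fin d) ℝ)
    (f : Fin d → ℝ) (hη : η = Matrix.diagonal f) (hf : ∀ i, f i = 1 ∨ f i = -1)
    (P : Matrix (Fin d) (Fin n) ℝ) (hrank : P.rank = d)
    (hnull : ∀ j : Fin n, (Pᵀ * η * P) j j ≠ 0)
    (hnorep : ∀ i j : Fin n, (∀ k : Fin d, P k i = P k j) → i = j) :
    (∃ σ : Equiv.Perm (Fin n), σ.permMatrix ℝ ≠ 1 ∧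
        (σ.permMatrix ℝ)ᵀ * (Pᵀ * η * P) * σ.permMatrix ℝ = Pᵀ * η * P) ↔
      (∃ (O : Matrix (Fin d) (Fin d) ℝ) (σ : Equiv.Perm (Fin n)),
        Oᵀ * η * O = η ∧ O ≠ 1 ∧ O * P = P * σ.permMatrix ℝ) :=
  point_group_correspondence_general η f hη hf P hrank hnorep
end

section
/- If two tuples of vectors (v_1,...,v_n) and (w_1,...,w_n) in an indefinite inner product space (ℝ^d, η) have identical Gram matrices ⟨v_k, v_l⟩ = ⟨w_k, w_l⟩ for all k, l, and both span ℝ^d, then there exists O ∈ G_η(d) with O v_k = w_k for all k. -/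
/-!
The Gram condition together with the nondegeneracy of `η` forces `v` and `w` to satisfy the
same linear relations: if `∑ cₖ vₖ = 0`, then `∑ cₖ wₖ` is `η`-orthogonal to every `wₗ`, hence
to everything. So `vₖ ↦ wₖ` extends to a linear map, and it preserves `η` because it does so
on the spanning family `v`.
-/

open Matrix

namespace LinearMap

section Ring

variable {R M N P : Type*} [Ring R] [AddCommGroup M] [Module R M] [AddCommGroup N]
  [Module R N] [AddCommGroup P] [Module R P]

theorem exists_comp_eq_of_surjective_of_ker_le {f : M →ₗ[R] N} {g : M →ₗ[R] P}
    (hf : Function.Surjective f) (hfg : ker f ≤ ker g) : ∃ T : N →ₗ[R] P, T ∘ₗ f = g :=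
  ⟨(ker f).liftQ g hfg ∘ₗ (f.quotKerEquivOfSurjective hf).symm.toLinearMap, by
    ext x
    simp [quotKerEquivOfSurjective_symm_apply]⟩

end Ring

variable {R M P ι : Type*} [CommRing R] [AddCommGroup M] [Module R M] [AddCommGroup P]
  [Module R P] {B : M →ₗ[R] M →ₗ[R] P} {v w : ι → M}

theorem ker_linearCombination_le_of_gram_eq (hB : B.SeparatingLeft)
    (hgram : ∀ k l, B (v k) (v l) = B (w k) (w l)) (hw : Submodule.span R (Set.range w) = ⊤) :
    ker (Finsupp.linearCombination R v) ≤ ker (Finsupp.linearCombination R w) := by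
  intro c hc
  rw [mem_ker] at hc ⊢
  refine hB _ fun y => ?_
  suffices B (Finsupp.linearCombination R w c) = 0 by rw [this, zero_apply]
  refine ext_on_range hw fun l => ?_
  have hcol : B.flip (w l) ∘ₗ Finsupp.linearCombination R w =
      B.flip (v l) ∘ₗ Finsupp.linearCombination R v := by
    ext k
    simp [hgram]
  simpa [hc] using congr($hcol c)

theorem compl₁₂_self_eq_of_gram_eq {T : M →ₗ[R] M} (hv : Submodule.span R (Set.range v) = ⊤)
    (hT : ∀ k, T (v k) = w k) (hgram : ∀ k l, B (v k) (v l) = B (w k) (w l)) :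
    B.compl₁₂ T T = B :=
  ext_on_range hv fun k => ext_on_range hv fun l => by simp [hT, hgram]

theorem exists_compl₁₂_self_eq_of_gram_eq (hB : B.SeparatingLeft)
    (hgram : ∀ k l, B (v k) (v l) = B (w k) (w l))
    (hv : Submodule.span R (Set.range v) = ⊤) (hw : Submodule.span R (Set.range w) = ⊤) :
    ∃ T : M →ₗ[R] M, B.compl₁₂ T T = B ∧ ∀ k, T (v k) = w k := by
  have hsurj : Function.Surjective (Finsupp.linearCombination R v) := by
    rw [← range_eq_top, Finsupp.range_linearCombination, hv]
  obtain ⟨T, hT⟩ := exists_comp_eq_of_surjective_of_ker_le hsurj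
    (ker_linearCombination_le_of_gram_eq hB hgram hw)
  have hTv : ∀ k, T (v k) = w k := fun k => by
    simpa using congr($hT (Finsupp.single k 1))
  exact ⟨T, compl₁₂_self_eq_of_gram_eq hv hTv hgram, hTv⟩

end LinearMap

/-- Tuples of spanning vectors with identical Gram matrices (w.r.t. the indefinite
inner product given by `η`) are related by an isometry in `G_η(d)`. -/
theorem exists_Geta_of_gram_eq {d n : ℕ}
    (η : Matrix (Fin d) (Fin d) ℝ)
    (f : Fin d → ℝ) (hη : η = Matrix.diagonal f) (hf : ∀ i, f i = 1 ∨ f i = -1)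
    (v w : Fin n → (Fin d → ℝ))
    (hgram : ∀ k l : Fin n, v k ⬝ᵥ η.mulVec (v l) = w k ⬝ᵥ η.mulVec (w l))
    (hv : Submodule.span ℝ (Set.range v) = ⊤)
    (hw : Submodule.span ℝ (Set.range w) = ⊤) :
    ∃ O : Matrix (Fin d) (Fin d) ℝ, Oᵀ * η * O = η ∧ ∀ k, O.mulVec (v k) = w k := by
  have hη_sep : (toLinearMap₂' ℝ η).SeparatingLeft (R := ℝ) := by
    rw [separatingLeft_toLinearMap₂'_iff, separatingLeft_iff_det_ne_zero, hη, det_diagonal]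
    exact Finset.prod_ne_zero_iff.mpr fun i _ => by rcases hf i with h | h <;> norm_num [h]
  obtain ⟨T, hTη, hTv⟩ := LinearMap.exists_compl₁₂_self_eq_of_gram_eq hη_sep
    (by simpa only [toLinearMap₂'_apply'] using hgram) hv hw
  refine ⟨LinearMap.toMatrix' T, (toLinearMap₂' ℝ (S₁ := ℝ) (S₂ := ℝ)).injective ?_, fun k => ?_⟩
  · rw [← Matrix.toLinearMap₂'_comp, toLin'_toMatrix', hTη]
  · rw [← toLin'_apply, toLin'_toMatrix', hTv]
end

section
/- Product-group frame averaging: Let G and H be groups acting on V whose actions commute, and let F: V → P(G)\{∅} be a frame that is H-invariant (F(h·x) = F(x)) and G-equivariant (F(g·x) = gF(x)), with F(x) finite. If f: V → W is H-equivariant, then ⟨f⟩_F(x) = (1/|F(x)|) Σ_{g∈F(x)} g·f(g^{-1}·x) is (G×H)-equivariant. -/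
open Finset

/-- Product-group frame averaging: if the frame is `H`-invariant and
`G`-equivariant and `f` is `H`-equivariant, then the frame average is
`(G × H)`-equivariant. -/
theorem product_group_frame_averaging {G H V W : Type*} [Group G] [Group H]
    [DecidableEq G]
    [MulAction G V] [MulAction H V]
    [AddCommGroup W] [Module ℝ W]
    [DistribMulAction G W] [DistribMulAction H W]
    [SMulCommClass G ℝ W] [SMulCommClass H ℝ W]
    (hcommV : ∀ (g : G) (h : H) (x : V), g • h • x = h • g • x)
    (hcommW : ∀ (g : G) (h : H) (w : W), g • h • w = h • g • w)
    (f : V → W) (hf : ∀ (h : H) (x : V), f (h • x) = h • f x)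
    (F : V → Finset G)
    (hne : ∀ x, (F x).Nonempty)
    (hHinv : ∀ (h : H) (x : V), F (h • x) = F x)
    (hGeq : ∀ (g : G) (x : V), F (g • x) = (F x).image (g * ·))
    (A : V → W)
    (hA : ∀ x : V, A x = ((F x).card : ℝ)⁻¹ • ∑ g ∈ F x, g • f (g⁻¹ • x)) :
    (∀ (g : G) (x : V), A (g • x) = g • A x) ∧
      (∀ (h : H) (x : V), A (h • x) = h • A x) := by
  constructor
  · intro g x
    rw [hA, hA, hGeq]
    rw [Finset.card_image_of_injective _ (mul_right_injective g)]
    rw [Finset.sum_image (by intro a _ b _ hab; exact mul_left_cancel hab)]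
    rw [smul_comm]
    congr 1
    rw [Finset.smul_sum]
    refine Finset.sum_congr rfl fun a _ => ?_
    rw [mul_smul, mul_inv_rev, mul_smul, inv_smul_smul]
  · intro h x
    rw [hA, hA, hHinv, smul_comm]
    congr 1
    rw [Finset.smul_sum]
    refine Finset.sum_congr rfl fun a _ => ?_
    rw [hcommV, hf, hcommW]
end
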